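/- For every ξ ∈ ℝ^d and every z ∈ ℝ^k one has 2⟨a ξ, ξ⟩ + 2⟨σᵀ ξ, z⟩ + ‖z‖² ≥ (κ/2)·‖ξ‖² + (κ/(2(κ + 4K)))·‖z‖². -/
import Mathlib


open scoped RealInnerProductSpace

theorem stmt_13 (d k : ℕ) (hd : 1 ≤ d) (hk : 1 ≤ k) (κ K : ℝ) (hκ : 0 < κ) (hK : 0 < K)
    (a : Matrix (Fin d) (Fin d) ℝ) (ha : a.IsSymm) (σ : Matrix (Fin d) (Fin k) ℝ)
    (hsp : ∀ ξ : EuclideanSpace ℝ (Fin d),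
      κ * ‖ξ‖ ^ 2 + ‖Matrix.toEuclideanLin σ.transpose ξ‖ ^ 2
        ≤ 2 * ⟪Matrix.toEuclideanLin a ξ, ξ⟫ ∧
      2 * ⟪Matrix.toEuclideanLin a ξ, ξ⟫ ≤ K * ‖ξ‖ ^ 2) :
    ∀ (ξ : EuclideanSpace ℝ (Fin d)) (z : EuclideanSpace ℝ (Fin k)),
      2 * ⟪Matrix.toEuclideanLin a ξ, ξ⟫ + 2 * ⟪Matrix.toEuclideanLin σ.transpose ξ, z⟫
          + ‖z‖ ^ 2
        ≥ κ / 2 * ‖ξ‖ ^ 2 + κ / (2 * (κ + 4 * K)) * ‖z‖ ^ 2 := by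
  intro ξ z
  obtain ⟨h1, h2⟩ := hsp ξ
  set u := ‖Matrix.toEuclideanLin σ.transpose ξ‖ with hu
  set v := ‖z‖ with hv
  set x := ‖ξ‖ with hx
  have hcs : |⟪Matrix.toEuclideanLin σ.transpose ξ, z⟫| ≤ u * v :=
    abs_real_inner_le_norm _ _
  have hcs' : ⟪Matrix.toEuclideanLin σ.transpose ξ, z⟫ ≥ -(u * v) :=
    neg_le_of_abs_le hcs
  have hu0 : 0 ≤ u := norm_nonneg _
  have hv0 : 0 ≤ v := norm_nonneg _
  have hx0 : 0 ≤ x := norm_nonneg _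
  have huK : u ^ 2 ≤ (K - κ) * x ^ 2 := by nlinarith
  have hden : 0 < κ + 4 * K := by linarith
  have key : κ / 2 * x ^ 2 + κ / (2 * (κ + 4 * K)) * v ^ 2
      ≤ κ * x ^ 2 + u ^ 2 - 2 * (u * v) + v ^ 2 := by
    rw [div_mul_eq_mul_div, div_mul_eq_mul_div,
      div_add_div _ _ (two_ne_zero) (by positivity), div_le_iff₀ (by positivity)]
    nlinarith [mul_nonneg (mul_nonneg hden.le (by linarith : (0:ℝ) ≤ κ + 2 * K))
        (by nlinarith : (0:ℝ) ≤ K * x ^ 2 - u ^ 2),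
      mul_nonneg hden.le (sq_nonneg ((κ + 2 * K) * u - 2 * K * v)),
      mul_nonneg (mul_nonneg hκ.le (by linarith : (0:ℝ) ≤ κ + 6 * K)) (sq_nonneg v),
      mul_pos hK (show (0:ℝ) < κ + 2 * K by linarith)]
  linarith
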